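/- Let B be a C*-algebra, E a Hilbert B-module, and K a closed linear subspace of E such that x·⟨y,k⟩ ∈ K for all x, y ∈ E, k ∈ K, and k·⟨x,y⟩ ∈ K for all x, y ∈ E, k ∈ K. Then K is a ternary ideal of E, i.e. x·⟨k,y⟩ ∈ K for all x, y ∈ E and k ∈ K. -/

import Mathlib

/-! Put `b = ⟪k, y⟫`. Since `⟪y <• ⟪y, k⟫, k⟫ = b * star b`, the first condition gives
`x <• (b * star b * a * b) = x <• ⟪y <• ⟪y, k⟫, k <• (a * b)⟫ ∈ K`, because
`k <• (a * b) = k <• ⟪k <• star a, y⟫ ∈ K` by the second condition. As `K` is closed, it remains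
to see that `b` lies in the closure of `b * star b * B * b`. For `c = b * star b` and
`f t = t ^ 2 / (t ^ 2 + δ ^ 2)` one has `‖b - f(c) * b‖ ^ 2 = ‖(t * (1 - f t) ^ 2)(c)‖ ≤ δ / 2`,
and `f(c) = c * g(c)` with `g t = t / (t ^ 2 + δ ^ 2)`; the second-order zero of `f` at `0` is what
makes `g(0) = 0`, so that `g(c)` exists in the non-unital algebra `B`. -/

open scoped RightActions

/-- The closed linear span of a subset of a topological `ℂ`-module. -/
noncomputable def clSpan {M : Type*} [AddCommMonoid M] [Module ℂ M] [TopologicalSpace M]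
    (S : Set M) : Set M :=
  closure (Submodule.span ℂ S : Set M)

/-- A subset is a (complex) linear subspace. -/
def IsLinearSubspace {M : Type*} [AddCommMonoid M] [Module ℂ M] (K : Set M) : Prop :=
  (0 : M) ∈ K ∧ (∀ x ∈ K, ∀ y ∈ K, x + y ∈ K) ∧ ∀ (c : ℂ), ∀ x ∈ K, c • x ∈ K

/-- A closed two-sided ideal of a C*-algebra `B`. -/
structure IsClosedTwoSidedIdeal {B : Type*} [NonUnitalCStarAlgebra B] (I : Set B) : Prop where
  isClosed : IsClosed I
  subspace : IsLinearSubspace I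
  mul_mem_left : ∀ (b : B), ∀ a ∈ I, b * a ∈ I
  mul_mem_right : ∀ (b : B), ∀ a ∈ I, a * b ∈ I

/-- The Hilbert C⋆-module class as it stood in Mathlib (December 2024): a right `A`-module
(action of `Aᵐᵒᵖ`) with an `A`-valued inner product, `A`-linear on the right. -/
class CStarModuleRight (A E : Type*) [NonUnitalSemiring A] [StarRing A] [Module ℂ A]
    [AddCommGroup E] [Module ℂ E] [PartialOrder A] [SMul Aᵐᵒᵖ E] [Norm A] [Norm E]
    extends Inner A E where
  inner_add_right {x} {y} {z} : inner x (y + z) = inner x y + inner x z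
  inner_self_nonneg {x} : 0 ≤ inner x x
  inner_self {x} : inner x x = 0 ↔ x = 0
  inner_op_smul_right {a : A} {x y : E} : inner x (y <• a) = inner x y * a
  inner_smul_right_complex {z : ℂ} {x} {y} : inner x (z • y) = z • inner x y
  star_inner x y : star (inner x y) = inner y x
  norm_eq_sqrt_norm_inner_self x : ‖x‖ = √‖inner x x‖

section HilbertModule

variable (B : Type*) [NonUnitalCStarAlgebra B] [PartialOrder B] [StarOrderedRing B]
variable {E : Type*} [NormedAddCommGroup E] [NormedSpace ℂ E] [SMul Bᵐᵒᵖ E] [CStarModuleRight B E]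

/-- `K ⊆ E` is an *ideal submodule* if it is the closed linear span of
`{x <• i : x ∈ E, i ∈ I}` for some closed two-sided ideal `I` of `B`. -/
def IsIdealSubmodule (K : Set E) : Prop :=
  ∃ I : Set B, IsClosedTwoSidedIdeal I ∧
    K = clSpan {z : E | ∃ x : E, ∃ i ∈ I, z = x <• i}

/-- A *ternary ideal* of a Hilbert `B`-module `E`: a linear subspace `K` with
`x <• ⟪k, y⟫ ∈ K` for all `x y ∈ E` and `k ∈ K`. -/
def IsTernaryIdeal (K : Set E) : Prop :=
  IsLinearSubspace K ∧ ∀ (x y : E), ∀ k ∈ K, x <• (inner B k y : B) ∈ K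

/-- `B_S`: the closed linear span in `B` of all inner products of elements of `S`. -/
noncomputable def rangeIdeal (S : Set E) : Set B :=
  clSpan {b : B | ∃ k ∈ S, ∃ k' ∈ S, b = (inner B k k' : B)}

/-- The orthogonal complement of a subset of a Hilbert `B`-module. -/
def perp (S : Set E) : Set E :=
  {x : E | ∀ s ∈ S, (inner B x s : B) = 0}

end HilbertModule

lemma abs_mul_one_sub_sq_div_sq_add_sq_sq_le {δ : ℝ} (hδ : 0 < δ) (t : ℝ) :
    |t * (1 - t ^ 2 / (t ^ 2 + δ ^ 2)) ^ 2| ≤ δ / 2 := by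
  have hsub : 1 - t ^ 2 / (t ^ 2 + δ ^ 2) = δ ^ 2 / (t ^ 2 + δ ^ 2) := by
    field_simp; ring
  rw [hsub, abs_mul, abs_of_nonneg (by positivity : (0 : ℝ) ≤ (δ ^ 2 / (t ^ 2 + δ ^ 2)) ^ 2),
    div_pow, mul_div_assoc', div_le_div_iff₀ (by positivity) two_pos]
  have hamgm : 2 * |t| * δ ≤ t ^ 2 + δ ^ 2 := by
    nlinarith [sq_nonneg (|t| - δ), sq_abs t]
  have hδsq : δ ^ 2 ≤ t ^ 2 + δ ^ 2 := by nlinarith [sq_nonneg t]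
  calc |t| * (δ ^ 2) ^ 2 * 2 = (2 * |t| * δ) * δ ^ 2 * δ := by ring
    _ ≤ (t ^ 2 + δ ^ 2) * (t ^ 2 + δ ^ 2) * δ := by gcongr
    _ = δ * (t ^ 2 + δ ^ 2) ^ 2 := by ring

section CStarAlgebra

variable {A : Type*} [NonUnitalCStarAlgebra A]

lemma norm_sub_cfcₙ_mul_star_self_mul_sq (b : A) {f : ℝ → ℝ} (hf : Continuous f)
    (hf0 : f 0 = 0) :
    ‖b - cfcₙ f (b * star b) * b‖ ^ 2 = ‖cfcₙ (fun t => t * (1 - f t) ^ 2) (b * star b)‖ := by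
  have he : star (cfcₙ f (b * star b)) = cfcₙ f (b * star b) :=
    (cfcₙ_predicate f (b * star b)).star_eq
  have hexpand : (b - cfcₙ f (b * star b) * b) * star (b - cfcₙ f (b * star b) * b) =
      cfcₙ (fun t => t * (1 - f t) ^ 2) (b * star b) := by
    rw [show (fun t => t * (1 - f t) ^ 2) = fun t => t - f t * t - t * f t + f t * t * f t by
      ext; ring]
    rw [cfcₙ_add (fun t => t - f t * t - t * f t) (fun t => f t * t * f t),
      cfcₙ_sub (fun t => t - f t * t) (fun t => t * f t), cfcₙ_sub (fun t => t) (fun t => f t * t),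
      cfcₙ_mul (fun t => f t * t) f, cfcₙ_mul f (fun t => t), cfcₙ_mul (fun t => t) f,
      cfcₙ_id' ℝ (b * star b), star_sub, star_mul, he]
    noncomm_ring
  rw [sq, ← CStarRing.norm_self_mul_star, hexpand]

lemma exists_norm_sub_mul_star_self_mul_mul_sq_le (b : A) {δ : ℝ} (hδ : 0 < δ) :
    ∃ a : A, ‖b - b * star b * a * b‖ ^ 2 ≤ δ / 2 := by
  have hg : Continuous fun t : ℝ => t / (t ^ 2 + δ ^ 2) :=
    continuous_id.div (by fun_prop) fun t => by positivity
  have hf : Continuous fun t : ℝ => t ^ 2 / (t ^ 2 + δ ^ 2) :=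
    (continuous_pow 2).div (by fun_prop) fun t => by positivity
  refine ⟨cfcₙ (fun t : ℝ => t / (t ^ 2 + δ ^ 2)) (b * star b), ?_⟩
  have hfactor : b * star b * cfcₙ (fun t : ℝ => t / (t ^ 2 + δ ^ 2)) (b * star b) =
      cfcₙ (fun t : ℝ => t ^ 2 / (t ^ 2 + δ ^ 2)) (b * star b) := by
    calc _ = cfcₙ (fun t : ℝ => t) (b * star b) *
          cfcₙ (fun t : ℝ => t / (t ^ 2 + δ ^ 2)) (b * star b) := by rw [cfcₙ_id' ℝ (b * star b)]
      _ = cfcₙ (fun t : ℝ => t * (t / (t ^ 2 + δ ^ 2))) (b * star b) :=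
          (cfcₙ_mul _ _ _ (hg := hg.continuousOn)).symm
      _ = _ := cfcₙ_congr fun t _ => by ring
  rw [hfactor, norm_sub_cfcₙ_mul_star_self_mul_sq b hf (by simp)]
  exact norm_cfcₙ_le fun t _ => (Real.norm_eq_abs _).trans_le
    (abs_mul_one_sub_sq_div_sq_add_sq_sq_le hδ t)

theorem mem_closure_range_mul_star_self_mul_mul (b : A) :
    b ∈ closure (Set.range fun a => b * star b * a * b) := by
  refine Metric.mem_closure_iff.2 fun ε hε => ?_
  obtain ⟨a, ha⟩ := exists_norm_sub_mul_star_self_mul_mul_sq_le b (pow_pos hε 2)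
  refine ⟨_, ⟨a, rfl⟩, ?_⟩
  rw [dist_eq_norm]
  nlinarith [norm_nonneg (b - b * star b * a * b)]

end CStarAlgebra

namespace CStarModuleRight

variable {B : Type*} [NonUnitalCStarAlgebra B] [PartialOrder B]
variable {E : Type*} [NormedAddCommGroup E] [Module ℂ E] [SMul Bᵐᵒᵖ E] [CStarModuleRight B E]

lemma inner_sub_right (x y z : E) : (inner B x (y - z) : B) = inner B x y - inner B x z :=
  eq_sub_of_add_eq (by rw [← inner_add_right (A := B), sub_add_cancel])

lemma inner_op_smul_left (a : B) (x y : E) : (inner B (x <• a) y : B) = star a * inner B x y := by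
  rw [← star_inner y, inner_op_smul_right, star_mul, star_inner]

lemma ext_inner_left {u v : E} (h : ∀ z : E, (inner B z u : B) = inner B z v) : u = v :=
  sub_eq_zero.1 <| (inner_self (A := B)).1 <| by rw [inner_sub_right, h, sub_self]

lemma op_smul_sub (x : E) (a a' : B) : x <• (a - a') = x <• a - x <• a' :=
  ext_inner_left (B := B) fun z => by
    rw [inner_op_smul_right, inner_sub_right, inner_op_smul_right, inner_op_smul_right, mul_sub]

lemma norm_op_smul_le (x : E) (a : B) : ‖x <• a‖ ≤ ‖x‖ * ‖a‖ := by
  have hsq : ‖(inner B (x <• a) (x <• a) : B)‖ ≤ (‖x‖ * ‖a‖) ^ 2 := by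
    rw [inner_op_smul_right, inner_op_smul_left, mul_pow, norm_eq_sqrt_norm_inner_self (A := B) x,
      Real.sq_sqrt (norm_nonneg _), sq, ← norm_star a, mul_comm]
    calc ‖star a * inner B x x * a‖ ≤ ‖star a‖ * ‖(inner B x x : B)‖ * ‖a‖ := by
          grw [norm_mul_le, norm_mul_le]
      _ = _ := by rw [norm_star]; ring
  rw [norm_eq_sqrt_norm_inner_self (A := B)]
  exact (Real.sqrt_le_left (by positivity)).2 hsq

lemma continuous_op_smul (x : E) : Continuous fun a : B => x <• a :=
  LipschitzWith.continuous (K := ‖x‖₊) <| LipschitzWith.of_dist_le_mul fun a a' => by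
    rw [dist_eq_norm, dist_eq_norm, ← op_smul_sub]
    exact norm_op_smul_le x (a - a')

end CStarModuleRight

open CStarModuleRight in
theorem isTernaryIdeal_of_two_conditions
    {B : Type*} [NonUnitalCStarAlgebra B] [PartialOrder B]
    {E : Type*} [NormedAddCommGroup E] [NormedSpace ℂ E] [SMul Bᵐᵒᵖ E]
    [CStarModuleRight B E] (K : Set E) (hcl : IsClosed K)
    (h1 : ∀ (x y : E), ∀ k ∈ K, x <• (inner B y k : B) ∈ K)
    (h2 : ∀ (x y : E), ∀ k ∈ K, k <• (inner B x y : B) ∈ K) :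
    ∀ (x y : E), ∀ k ∈ K, x <• (inner B k y : B) ∈ K := by
  intro x y k hk
  set b : B := inner B k y
  have hbb : (inner B (y <• (inner B y k : B)) k : B) = b * star b := by
    rw [inner_op_smul_left, star_inner, star_inner]
  have happrox : ∀ a : B, x <• (b * star b * a * b) ∈ K := by
    intro a
    have hk' : k <• (a * b) ∈ K := by
      simpa only [inner_op_smul_left, star_star] using h2 (k <• star a) y k hk
    simpa only [inner_op_smul_right, hbb, mul_assoc] using h1 x (y <• (inner B y k : B)) _ hk'
  exact (hcl.preimage (continuous_op_smul x)).closure_subset_iff.2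
    (Set.range_subset_iff.2 happrox) (mem_closure_range_mul_star_self_mul_mul b)
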